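/- Let a_n be defined over ℚ(q) by a_{n+2} = (1+q) a_{n+1} + (q^{2n+4} - q) a_n with a_0 = 1, a_1 = 1 + q. Then for all n ≥ 0, a_n = ∑_{k=0}^∞ q^{2k(k+1)} C(n+1, 2k+1)_q (a finite sum since C(n+1,2k+1)_q = 0 for 2k+1 > n+1). -/
import Mathlib

open Finset

/-- q-Pochhammer symbol (a;q)_n. -/
noncomputable def qPoch {K : Type*} [Field K] (q a : K) (n : ℕ) : K :=
  ∏ j ∈ Finset.range n, (1 - a * q ^ j)

/-- Gaussian (q-)binomial coefficient. -/
noncomputable def qbinom {K : Type*} [Field K] (q : K) (n k : ℕ) : K :=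
  if k ≤ n then qPoch q q n / (qPoch q q k * qPoch q q (n - k)) else 0

section Aux

variable {K : Type*} [Field K]

lemma qPoch_succ (q a : K) (n : ℕ) : qPoch q a (n + 1) = qPoch q a n * (1 - a * q ^ n) :=
  Finset.prod_range_succ _ _

lemma qPoch_zero (q a : K) : qPoch q a 0 = 1 := Finset.prod_range_zero _

lemma qbinom_of_gt (q : K) {n k : ℕ} (h : n < k) : qbinom q n k = 0 := if_neg (by omega)

variable {q : K} (hP : ∀ n, qPoch q q n ≠ 0)

include hP

lemma qbinom_zero_right (n : ℕ) : qbinom q n 0 = 1 := by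
  rw [qbinom, if_pos (Nat.zero_le n), qPoch_zero, Nat.sub_zero, one_mul, div_self (hP n)]

lemma qbinom_pascal (n k : ℕ) (hk : k ≤ n) :
    qbinom q (n + 1) (k + 1) = qbinom q n (k + 1) + q ^ (n - k) * qbinom q n k := by
  rcases eq_or_lt_of_le hk with rfl | hlt
  · rw [qbinom_of_gt q (Nat.lt_succ_self k), qbinom, if_pos le_rfl, qbinom, if_pos le_rfl,
      Nat.sub_self, Nat.sub_self, qPoch_zero, mul_one, div_self (hP (k + 1))]
    simp [div_self (hP k)]
  · obtain ⟨d, rfl⟩ : ∃ d, n = k + d + 1 := ⟨n - k - 1, by omega⟩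
    rw [qbinom, if_pos (by omega), qbinom, if_pos (by omega), qbinom, if_pos (by omega)]
    have e1 : k + d + 1 + 1 - (k + 1) = d + 1 := by omega
    have e2 : k + d + 1 - (k + 1) = d := by omega
    have e3 : k + d + 1 - k = d + 1 := by omega
    rw [e1, e2, e3]
    have hu : (1 - q * q ^ k) ≠ 0 := by
      have := hP (k + 1); rw [qPoch_succ] at this; exact right_ne_zero_of_mul this
    have hv : (1 - q * q ^ d) ≠ 0 := by
      have := hP (d + 1); rw [qPoch_succ] at this; exact right_ne_zero_of_mul this
    have hA := hP k
    have hB := hP d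
    have hN := hP (k + d + 1)
    rw [show k + d + 1 + 1 = (k + d + 1) + 1 from rfl, qPoch_succ q q (k + d + 1),
      qPoch_succ q q k, qPoch_succ q q d]
    field_simp
    ring
end Aux

noncomputable def Tsum {K : Type*} [Field K] (q : K) (m N : ℕ) : K :=
  ∑ k ∈ Finset.range N, q ^ (2 * k * (k + 1)) * qbinom q m (2 * k + 1)

noncomputable def Usum {K : Type*} [Field K] (q : K) (m N : ℕ) : K :=
  ∑ k ∈ Finset.range N, q ^ (2 * (k * k)) * qbinom q m (2 * k)

section Sums

variable {K : Type*} [Field K] {q : K} (hP : ∀ n, qPoch q q n ≠ 0)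

lemma Tsum_stab (q : K) (m N N' : ℕ) (hN : m ≤ 2 * N) (h : N ≤ N') :
    Tsum q m N' = Tsum q m N := by
  unfold Tsum
  rw [← Finset.sum_subset (Finset.range_subset_range.mpr h)]
  intro k hk hk'
  simp only [Finset.mem_range, not_lt] at hk hk'
  rw [qbinom_of_gt q (by omega), mul_zero]

include hP

lemma Tsum_step (m N : ℕ) : Tsum q (m + 1) N = Tsum q m N + q ^ m * Usum q m N := by
  unfold Tsum Usum
  rw [Finset.mul_sum, ← Finset.sum_add_distrib]
  refine Finset.sum_congr rfl fun k _ => ?_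
  by_cases h : 2 * k ≤ m
  · rw [qbinom_pascal hP m (2 * k) h]
    have e : 2 * k * (k + 1) + (m - 2 * k) = m + 2 * (k * k) := by
      have h1 : 2 * k * (k + 1) = 2 * (k * k) + 2 * k := by ring
      omega
    have hp : q ^ (2 * k * (k + 1)) * q ^ (m - 2 * k) = q ^ m * q ^ (2 * (k * k)) := by
      rw [← pow_add, ← pow_add, e]
    linear_combination qbinom q m (2 * k) * hp
  · rw [qbinom_of_gt q (show m + 1 < 2 * k + 1 by omega),
      qbinom_of_gt q (show m < 2 * k + 1 by omega),
      qbinom_of_gt q (show m < 2 * k by omega)]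
    ring

lemma Usum_step (m N : ℕ) :
    Usum q (m + 1) (N + 1) = Usum q m (N + 1) + q ^ (m + 1) * Tsum q m N := by
  have key : ∀ k : ℕ,
      q ^ (2 * ((k + 1) * (k + 1))) * qbinom q (m + 1) (2 * (k + 1)) =
        q ^ (2 * ((k + 1) * (k + 1))) * qbinom q m (2 * (k + 1)) +
          q ^ (m + 1) * (q ^ (2 * k * (k + 1)) * qbinom q m (2 * k + 1)) := by
    intro k
    by_cases h : 2 * k + 1 ≤ m
    · rw [show 2 * (k + 1) = (2 * k + 1) + 1 by ring, qbinom_pascal hP m (2 * k + 1) h]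
      have e : 2 * ((k + 1) * (k + 1)) + (m - (2 * k + 1)) = (m + 1) + 2 * k * (k + 1) := by
        have h1 : 2 * ((k + 1) * (k + 1)) = 2 * (k * k) + 4 * k + 2 := by ring
        have h2 : 2 * k * (k + 1) = 2 * (k * k) + 2 * k := by ring
        omega
      have hp : q ^ (2 * ((k + 1) * (k + 1))) * q ^ (m - (2 * k + 1)) =
          q ^ (m + 1) * q ^ (2 * k * (k + 1)) := by
        rw [← pow_add, ← pow_add, e]
      linear_combination qbinom q m (2 * k + 1) * hp
    · rw [qbinom_of_gt q (show m + 1 < 2 * (k + 1) by omega),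
        qbinom_of_gt q (show m < 2 * (k + 1) by omega),
        qbinom_of_gt q (show m < 2 * k + 1 by omega)]
      ring
  unfold Tsum Usum
  rw [Finset.sum_range_succ' (fun k => q ^ (2 * (k * k)) * qbinom q (m + 1) (2 * k)) N,
    Finset.sum_range_succ' (fun k => q ^ (2 * (k * k)) * qbinom q m (2 * k)) N]
  simp only [Nat.mul_zero, Nat.zero_mul, pow_zero, one_mul, qbinom_zero_right hP]
  have hsum : ∑ k ∈ Finset.range N,
      q ^ (2 * ((k + 1) * (k + 1))) * qbinom q (m + 1) (2 * (k + 1)) =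
      ∑ k ∈ Finset.range N, (q ^ (2 * ((k + 1) * (k + 1))) * qbinom q m (2 * (k + 1)) +
        q ^ (m + 1) * (q ^ (2 * k * (k + 1)) * qbinom q m (2 * k + 1))) :=
    Finset.sum_congr rfl fun k _ => key k
  rw [hsum, Finset.sum_add_distrib, Finset.mul_sum]
  ring

lemma Tsum_rec (m : ℕ) :
    Tsum q (m + 2) (m + 2) =
      (1 + q) * Tsum q (m + 1) (m + 1) + (q ^ (2 * m + 2) - q) * Tsum q m m := by
  have h1 := Tsum_step hP (m + 1) (m + 2)
  have h2 := Usum_step hP m (m + 1)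
  have h3 := Tsum_step hP m (m + 2)
  have s1 : Tsum q (m + 1) (m + 2) = Tsum q (m + 1) (m + 1) :=
    Tsum_stab q (m + 1) (m + 1) (m + 2) (by omega) (by omega)
  have s2 : Tsum q m (m + 2) = Tsum q m m :=
    Tsum_stab q m m (m + 2) (by omega) (by omega)
  have s3 : Tsum q m (m + 1) = Tsum q m m :=
    Tsum_stab q m m (m + 1) (by omega) (by omega)
  linear_combination h1 + q ^ (m + 1) * h2 - q * h3 + (1 + q) * s1 - q * s2 +
    q ^ (2 * m + 2) * s3

lemma Tsum_one : Tsum q 1 1 = 1 := by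
  unfold Tsum
  rw [Finset.sum_range_one]
  have : qbinom q 1 1 = 1 := by
    rw [qbinom, if_pos le_rfl, Nat.sub_self, qPoch_zero, mul_one, div_self (hP 1)]
  simp [this]

lemma Tsum_two : Tsum q 2 2 = 1 + q := by
  have p1 : qPoch q q 1 = 1 - q := by
    rw [qPoch_succ, qPoch_zero, one_mul, pow_zero, mul_one]
  have p2 : qPoch q q 2 = (1 - q) * (1 - q * q) := by
    rw [qPoch_succ, p1, pow_one]
  have hq1 : (1 : K) - q ≠ 0 := p1 ▸ hP 1
  unfold Tsum
  rw [Finset.sum_range_succ, Finset.sum_range_one]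
  rw [qbinom_of_gt q (show 2 < 2 * 1 + 1 by omega)]
  have h1 : qbinom q 2 1 = 1 + q := by
    rw [qbinom, if_pos (by omega), show (2 : ℕ) - 1 = 1 from rfl, p1, p2]
    field_simp
    ring
  simp [h1]

end Sums

lemma ratfunc_qPoch_ne_zero (n : ℕ) :
    qPoch (RatFunc.X : RatFunc ℚ) RatFunc.X n ≠ 0 := by
  unfold qPoch
  rw [Finset.prod_ne_zero_iff]
  intro j _
  have h : (1 : RatFunc ℚ) - RatFunc.X * RatFunc.X ^ j =
      algebraMap (Polynomial ℚ) (RatFunc ℚ) (1 - Polynomial.X * Polynomial.X ^ j) := by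
    simp [map_sub, map_mul, map_pow, RatFunc.algebraMap_X]
  rw [h]
  rw [map_ne_zero_iff _ (RatFunc.algebraMap_injective ℚ)]
  intro hc
  have := congrArg (Polynomial.eval 0) hc
  simp at this

/-- Identity 3.38 of Sills' list: the finitization a_n equals a single q-binomial sum. -/
theorem sills_identity_338 (a : ℕ → RatFunc ℚ) (q : RatFunc ℚ) (hq : q = RatFunc.X)
    (ha0 : a 0 = 1) (ha1 : a 1 = 1 + q)
    (ha : ∀ n : ℕ, a (n + 2) = (1 + q) * a (n + 1) + (q ^ (2 * n + 4) - q) * a n) :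
    ∀ n : ℕ, a n = ∑ k ∈ Finset.range (n + 1),
      q ^ (2 * k * (k + 1)) * qbinom q (n + 1) (2 * k + 1) := by
  subst hq
  have hP := ratfunc_qPoch_ne_zero
  have key : ∀ n : ℕ, a n = Tsum RatFunc.X (n + 1) (n + 1) := by
    intro n
    induction n using Nat.twoStepInduction with
    | zero => rw [ha0, Tsum_one hP]
    | one => rw [ha1, Tsum_two hP]
    | more n ih1 ih2 =>
      rw [ha n, ih1, ih2]
      have := Tsum_rec hP (n + 1)
      rw [show 2 * (n + 1) + 2 = 2 * n + 4 by ring] at this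
      rw [show n + 2 + 1 = n + 1 + 2 by ring, this]
  intro n
  rw [key n]
  rfl
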